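/- arXiv:2004.06330 — 3 statements merged into one kernel-verified Lean document; each statement's English description precedes it below -/
import Mathlib

section
/- Under the standing assumptions on C, H, d, there exist constants C₁, C₂, C₃ > 0, independent of γ, such that for every γ > 0, all z₁, z₂ ∈ ℝ, and all Q₁, Q₂ ∈ E: ⟨F_{z₁,γ}(Q₁) − F_{z₂,γ}(Q₂), Q₁ − Q₂⟩ ≥ C₁‖Q₁ − Q₂‖² − C₂‖Q₂‖ |z₁ − z₂| ‖Q₁ − Q₂‖ − C₃ |z₁ − z₂| ‖Q₁ − Q₂‖. -/
open scoped RealInnerProductSpace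

lemma grad_h_mono {E : Type*} [NormedAddCommGroup E] [InnerProductSpace ℝ E]
    (ε : ℝ) (hε : 0 < ε) (Q₁ Q₂ : E) :
    0 ≤ ⟪(Real.sqrt (‖Q₁‖ ^ 2 + ε))⁻¹ • Q₁ - (Real.sqrt (‖Q₂‖ ^ 2 + ε))⁻¹ • Q₂,
        Q₁ - Q₂⟫ := by
  set n₁ := ‖Q₁‖ with hn₁
  set n₂ := ‖Q₂‖ with hn₂
  have hn₁0 : 0 ≤ n₁ := norm_nonneg _
  have hn₂0 : 0 ≤ n₂ := norm_nonneg _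
  set s₁ := Real.sqrt (n₁ ^ 2 + ε) with hs₁def
  set s₂ := Real.sqrt (n₂ ^ 2 + ε) with hs₂def
  have hs₁ : 0 < s₁ := Real.sqrt_pos.2 (by positivity)
  have hs₂ : 0 < s₂ := Real.sqrt_pos.2 (by positivity)
  have hs₁sq : s₁ ^ 2 = n₁ ^ 2 + ε := Real.sq_sqrt (by positivity)
  have hs₂sq : s₂ ^ 2 = n₂ ^ 2 + ε := Real.sq_sqrt (by positivity)
  have hp : ⟪Q₁, Q₂⟫ ≤ n₁ * n₂ := real_inner_le_norm Q₁ Q₂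
  have key : 0 ≤ (n₁ - n₂) * (s₂ * n₁ - s₁ * n₂) := by
    rcases le_total n₂ n₁ with h | h
    · have h2 : (s₁ * n₂) ^ 2 ≤ (s₂ * n₁) ^ 2 := by
        rw [mul_pow, mul_pow, hs₁sq, hs₂sq]
        nlinarith [mul_le_mul_of_nonneg_left
          (by nlinarith [mul_self_le_mul_self hn₂0 h] : n₂ ^ 2 ≤ n₁ ^ 2) hε.le]
      have h3 : s₁ * n₂ ≤ s₂ * n₁ := by
        have := Real.sqrt_le_sqrt h2
        rwa [Real.sqrt_sq (by positivity), Real.sqrt_sq (by positivity)] at this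
      nlinarith
    · have h2 : (s₂ * n₁) ^ 2 ≤ (s₁ * n₂) ^ 2 := by
        rw [mul_pow, mul_pow, hs₁sq, hs₂sq]
        nlinarith [mul_le_mul_of_nonneg_left
          (by nlinarith [mul_self_le_mul_self hn₁0 h] : n₁ ^ 2 ≤ n₂ ^ 2) hε.le]
      have h3 : s₂ * n₁ ≤ s₁ * n₂ := by
        have := Real.sqrt_le_sqrt h2
        rwa [Real.sqrt_sq (by positivity), Real.sqrt_sq (by positivity)] at this
      nlinarith
  have hA : 0 ≤ s₂ * n₁ ^ 2 + s₁ * n₂ ^ 2 - (s₁ + s₂) * ⟪Q₁, Q₂⟫ := by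
    nlinarith [mul_nonneg (by positivity : (0:ℝ) ≤ s₁ + s₂) (sub_nonneg.2 hp)]
  have hval : ⟪s₁⁻¹ • Q₁ - s₂⁻¹ • Q₂, Q₁ - Q₂⟫
      = (s₂ * n₁ ^ 2 + s₁ * n₂ ^ 2 - (s₁ + s₂) * ⟪Q₁, Q₂⟫) / (s₁ * s₂) := by
    simp only [inner_sub_left, inner_sub_right, real_inner_smul_left,
      real_inner_self_eq_norm_sq, real_inner_comm Q₂ Q₁, ← hn₁, ← hn₂]
    field_simp
    ring
  rw [hval]
  positivity

lemma grad_h_norm_le {E : Type*} [NormedAddCommGroup E] [InnerProductSpace ℝ E]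
    (ε : ℝ) (hε : 0 < ε) (Q : E) :
    ‖(Real.sqrt (‖Q‖ ^ 2 + ε))⁻¹ • Q‖ ≤ 1 := by
  have hs : 0 < Real.sqrt (‖Q‖ ^ 2 + ε) := Real.sqrt_pos.2 (by positivity)
  rw [norm_smul, Real.norm_eq_abs, abs_of_pos (by positivity)]
  rw [inv_mul_le_iff₀ hs, mul_one]
  calc ‖Q‖ = Real.sqrt (‖Q‖ ^ 2) := by rw [Real.sqrt_sq (norm_nonneg _)]
    _ ≤ Real.sqrt (‖Q‖ ^ 2 + ε) := Real.sqrt_le_sqrt (by linarith)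

lemma inner_ge_neg_norm {E : Type*} [NormedAddCommGroup E] [InnerProductSpace ℝ E]
    (x y : E) : -(‖x‖ * ‖y‖) ≤ ⟪x, y⟫ := by
  have := abs_real_inner_le_norm x y
  have h2 := neg_abs_le (⟪x, y⟫ : ℝ)
  linarith

set_option maxHeartbeats 1000000 in
/-- There exist constants `C₁, C₂, C₃ > 0`, independent of `γ`, such that for all
`z₁, z₂` and `Q₁, Q₂`,
`⟪F_{z₁,γ}(Q₁) − F_{z₂,γ}(Q₂), Q₁ − Q₂⟫ ≥ C₁‖Q₁−Q₂‖² − C₂‖Q₂‖|z₁−z₂|‖Q₁−Q₂‖ − C₃|z₁−z₂|‖Q₁−Q₂‖`,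
where `F_{z,γ}(Q) = C(z)Q + H(z)Q + d(z)∇h_γ(Q)`. -/
theorem F_monotone_two_phases
    {E : Type*} [NormedAddCommGroup E] [InnerProductSpace ℝ E] [FiniteDimensional ℝ E]
    (C H : ℝ → E →ₗ[ℝ] E) (d : ℝ → ℝ)
    (αC βC αH βH αd βd LC LH Ld : ℝ)
    (hαC : 0 < αC) (hβC : αC ≤ βC) (hαH : 0 < αH) (hβH : αH ≤ βH)
    (hαd : 0 < αd) (hβd : αd ≤ βd)
    (hCsym : ∀ (z : ℝ) (x y : E), ⟪C z x, y⟫ = ⟪x, C z y⟫)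
    (hHsym : ∀ (z : ℝ) (x y : E), ⟪H z x, y⟫ = ⟪x, H z y⟫)
    (hClip : ∀ (z₁ z₂ : ℝ) (x : E), ‖C z₁ x - C z₂ x‖ ≤ LC * |z₁ - z₂| * ‖x‖)
    (hHlip : ∀ (z₁ z₂ : ℝ) (x : E), ‖H z₁ x - H z₂ x‖ ≤ LH * |z₁ - z₂| * ‖x‖)
    (hdlip : ∀ z₁ z₂ : ℝ, |d z₁ - d z₂| ≤ Ld * |z₁ - z₂|)
    (hCbound : ∀ (z : ℝ) (x : E), αC * ‖x‖ ^ 2 ≤ ⟪C z x, x⟫ ∧ ⟪C z x, x⟫ ≤ βC * ‖x‖ ^ 2)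
    (hHbound : ∀ (z : ℝ) (x : E), αH * ‖x‖ ^ 2 ≤ ⟪H z x, x⟫ ∧ ⟪H z x, x⟫ ≤ βH * ‖x‖ ^ 2)
    (hdbound : ∀ z : ℝ, αd ≤ d z ∧ d z ≤ βd) :
    ∃ C₁ > 0, ∃ C₂ > 0, ∃ C₃ > 0, ∀ (γ : ℝ), 0 < γ → ∀ (z₁ z₂ : ℝ) (Q₁ Q₂ : E),
      ⟪(C z₁ Q₁ + H z₁ Q₁ + (d z₁ * (Real.sqrt (‖Q₁‖ ^ 2 + 1 / γ ^ 2))⁻¹) • Q₁) -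
          (C z₂ Q₂ + H z₂ Q₂ + (d z₂ * (Real.sqrt (‖Q₂‖ ^ 2 + 1 / γ ^ 2))⁻¹) • Q₂),
        Q₁ - Q₂⟫
        ≥ C₁ * ‖Q₁ - Q₂‖ ^ 2 - C₂ * ‖Q₂‖ * |z₁ - z₂| * ‖Q₁ - Q₂‖ -
          C₃ * |z₁ - z₂| * ‖Q₁ - Q₂‖ := by
  refine ⟨αC + αH, by positivity, |LC| + |LH| + 1, by positivity,
    |Ld| + 1, by positivity, ?_⟩
  intro γ hγ z₁ z₂ Q₁ Q₂
  set ε : ℝ := 1 / γ ^ 2 with hεdef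
  have hε : 0 < ε := by positivity
  set v₁ : E := (Real.sqrt (‖Q₁‖ ^ 2 + ε))⁻¹ • Q₁ with hv₁
  set v₂ : E := (Real.sqrt (‖Q₂‖ ^ 2 + ε))⁻¹ • Q₂ with hv₂
  set Q : E := Q₁ - Q₂ with hQ
  have hnQ : 0 ≤ ‖Q‖ := norm_nonneg _
  have hnQ₂ : 0 ≤ ‖Q₂‖ := norm_nonneg _
  have habs : 0 ≤ |z₁ - z₂| := abs_nonneg _
  -- rewrite the vector
  have hvec :
      (C z₁ Q₁ + H z₁ Q₁ + (d z₁ * (Real.sqrt (‖Q₁‖ ^ 2 + 1 / γ ^ 2))⁻¹) • Q₁) -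
        (C z₂ Q₂ + H z₂ Q₂ + (d z₂ * (Real.sqrt (‖Q₂‖ ^ 2 + 1 / γ ^ 2))⁻¹) • Q₂)
      = (C z₁ Q + (C z₁ Q₂ - C z₂ Q₂)) + (H z₁ Q + (H z₁ Q₂ - H z₂ Q₂)) +
        (d z₁ • (v₁ - v₂) + (d z₁ - d z₂) • v₂) := by
    rw [hQ, map_sub, map_sub, hv₁, hv₂, mul_smul, mul_smul, ← hεdef]
    rw [smul_sub, sub_smul]
    abel
  rw [hvec, inner_add_left, inner_add_left, inner_add_left, inner_add_left,
    inner_add_left]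
  -- bound each piece
  have hT1 : αC * ‖Q‖ ^ 2 ≤ ⟪C z₁ Q, Q⟫ := (hCbound z₁ Q).1
  have hT2 : αH * ‖Q‖ ^ 2 ≤ ⟪H z₁ Q, Q⟫ := (hHbound z₁ Q).1
  have hT1' : -(LC * |z₁ - z₂| * ‖Q₂‖ * ‖Q‖) ≤ ⟪C z₁ Q₂ - C z₂ Q₂, Q⟫ := by
    refine le_trans ?_ (inner_ge_neg_norm _ _)
    have := hClip z₁ z₂ Q₂
    nlinarith [norm_nonneg (C z₁ Q₂ - C z₂ Q₂)]
  have hT2' : -(LH * |z₁ - z₂| * ‖Q₂‖ * ‖Q‖) ≤ ⟪H z₁ Q₂ - H z₂ Q₂, Q⟫ := by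
    refine le_trans ?_ (inner_ge_neg_norm _ _)
    have := hHlip z₁ z₂ Q₂
    nlinarith [norm_nonneg (H z₁ Q₂ - H z₂ Q₂)]
  have hT3 : (0:ℝ) ≤ ⟪d z₁ • (v₁ - v₂), Q⟫ := by
    rw [real_inner_smul_left]
    have hd0 : 0 ≤ d z₁ := le_trans hαd.le (hdbound z₁).1
    exact mul_nonneg hd0 (grad_h_mono ε hε Q₁ Q₂)
  have hT3' : -(Ld * |z₁ - z₂| * ‖Q‖) ≤ ⟪(d z₁ - d z₂) • v₂, Q⟫ := by
    rw [real_inner_smul_left]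
    have h1 : -(|d z₁ - d z₂| * ‖Q‖) ≤ (d z₁ - d z₂) * ⟪v₂, Q⟫ := by
      have h2 : |(d z₁ - d z₂) * ⟪v₂, Q⟫| ≤ |d z₁ - d z₂| * ‖Q‖ := by
        rw [abs_mul]
        refine mul_le_mul_of_nonneg_left ?_ (abs_nonneg _)
        calc |(⟪v₂, Q⟫ : ℝ)| ≤ ‖v₂‖ * ‖Q‖ := abs_real_inner_le_norm v₂ Q
          _ ≤ 1 * ‖Q‖ := by
            exact mul_le_mul_of_nonneg_right (grad_h_norm_le ε hε Q₂) hnQ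
          _ = ‖Q‖ := one_mul _
      have := neg_abs_le ((d z₁ - d z₂) * ⟪v₂, Q⟫)
      linarith
    refine le_trans ?_ h1
    have := hdlip z₁ z₂
    nlinarith [abs_nonneg (d z₁ - d z₂)]
  -- put things together
  have hLC : LC * |z₁ - z₂| * ‖Q₂‖ * ‖Q‖ ≤ (|LC| + |LH| + 1) * ‖Q₂‖ * |z₁ - z₂| * ‖Q‖ / 2 +
      (|LC| + |LH| + 1) * ‖Q₂‖ * |z₁ - z₂| * ‖Q‖ / 2 - LH * |z₁ - z₂| * ‖Q₂‖ * ‖Q‖ := by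
    nlinarith [le_abs_self LC, le_abs_self LH, neg_abs_le LH,
      mul_nonneg (mul_nonneg (mul_nonneg habs hnQ₂) hnQ) (abs_nonneg LC),
      mul_nonneg (mul_nonneg habs hnQ₂) hnQ]
  have hLd : Ld * |z₁ - z₂| * ‖Q‖ ≤ (|Ld| + 1) * |z₁ - z₂| * ‖Q‖ := by
    nlinarith [le_abs_self Ld, mul_nonneg habs hnQ]
  linarith [hT1, hT2, hT1', hT2', hT3, hT3', hLC, hLd]
end

section
/- Under the standing assumptions on C, H, d, for every γ > 0 and every z ∈ ℝ the map F_{z,γ} : E → E is a bijection, and there exists a constant C̃ > 0 independent of γ and z (one may take C̃ = 1/(α_C + α_H)) such that ‖F_{z,γ}^{-1}(S₁) − F_{z,γ}^{-1}(S₂)‖ ≤ C̃ ‖S₁ − S₂‖ for all S₁, S₂ ∈ E. -/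
open scoped RealInnerProductSpace

lemma sqrt_add_pos {c : ℝ} (hc : 0 < c) (a : ℝ) : 0 < Real.sqrt (a ^ 2 + c) :=
  Real.sqrt_pos.2 (by positivity)

/-- Monotonicity of `Q ↦ (‖Q‖² + c)^{-1/2} • Q`. -/
lemma grad_mono {E : Type*} [NormedAddCommGroup E] [InnerProductSpace ℝ E]
    {c : ℝ} (hc : 0 < c) (Q₁ Q₂ : E) :
    0 ≤ ⟪(Real.sqrt (‖Q₁‖ ^ 2 + c))⁻¹ • Q₁ - (Real.sqrt (‖Q₂‖ ^ 2 + c))⁻¹ • Q₂, Q₁ - Q₂⟫ := by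
  set a := ‖Q₁‖ with ha
  set b := ‖Q₂‖ with hb
  set s₁ := Real.sqrt (a ^ 2 + c) with hs₁d
  set s₂ := Real.sqrt (b ^ 2 + c) with hs₂d
  have hs₁ : 0 < s₁ := sqrt_add_pos hc a
  have hs₂ : 0 < s₂ := sqrt_add_pos hc b
  have hs₁sq : s₁ ^ 2 = a ^ 2 + c := Real.sq_sqrt (by positivity)
  have hs₂sq : s₂ ^ 2 = b ^ 2 + c := Real.sq_sqrt (by positivity)
  have ha0 : 0 ≤ a := norm_nonneg _
  have hb0 : 0 ≤ b := norm_nonneg _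
  have hip : ⟪Q₁, Q₂⟫ ≤ a * b := real_inner_le_norm Q₁ Q₂
  have key : 0 ≤ (a - b) * (a * s₂ - b * s₁) := by
    rcases eq_or_lt_of_le (by positivity : (0:ℝ) ≤ a * s₂ + b * s₁) with h | h
    · have ha' : a = 0 := by nlinarith
      have hb' : b = 0 := by nlinarith
      simp [ha', hb']
    · have hid : (a - b) * (a * s₂ - b * s₁) * (a * s₂ + b * s₁) = c * (a - b) ^ 2 * (a + b) := by
        linear_combination ((a - b) * a ^ 2) * hs₂sq - ((a - b) * b ^ 2) * hs₁sq
      nlinarith [mul_nonneg (mul_nonneg hc.le (sq_nonneg (a - b))) (add_nonneg ha0 hb0)]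
  have expand : ⟪(s₁⁻¹ • Q₁ - s₂⁻¹ • Q₂ : E), Q₁ - Q₂⟫
      = s₁⁻¹ * a ^ 2 + s₂⁻¹ * b ^ 2 - (s₁⁻¹ + s₂⁻¹) * ⟪Q₁, Q₂⟫ := by
    simp only [inner_sub_left, inner_sub_right, real_inner_smul_left,
      real_inner_self_eq_norm_sq, real_inner_comm Q₂ Q₁]
    ring
  rw [expand]
  have h1 : s₁⁻¹ * a ^ 2 + s₂⁻¹ * b ^ 2 - (s₁⁻¹ + s₂⁻¹) * (a * b)
      = (a - b) * (a * s₂ - b * s₁) / (s₁ * s₂) := by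
    field_simp
    ring
  have h2 : 0 ≤ (a - b) * (a * s₂ - b * s₁) / (s₁ * s₂) :=
    div_nonneg key (mul_pos hs₁ hs₂).le
  nlinarith [mul_nonneg (add_nonneg (inv_nonneg.2 hs₁.le) (inv_nonneg.2 hs₂.le))
    (sub_nonneg.2 hip)]

/-- Lipschitz bound for `Q ↦ (‖Q‖² + c)^{-1/2} • Q`. -/
lemma grad_lip {E : Type*} [NormedAddCommGroup E] [InnerProductSpace ℝ E]
    {c : ℝ} (hc : 0 < c) (Q₁ Q₂ : E) :
    ‖(Real.sqrt (‖Q₁‖ ^ 2 + c))⁻¹ • Q₁ - (Real.sqrt (‖Q₂‖ ^ 2 + c))⁻¹ • Q₂‖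
      ≤ 2 * (Real.sqrt c)⁻¹ * ‖Q₁ - Q₂‖ := by
  set a := ‖Q₁‖ with ha
  set b := ‖Q₂‖ with hb
  set s₁ := Real.sqrt (a ^ 2 + c) with hs₁d
  set s₂ := Real.sqrt (b ^ 2 + c) with hs₂d
  have hs₁ : 0 < s₁ := sqrt_add_pos hc a
  have hs₂ : 0 < s₂ := sqrt_add_pos hc b
  have hs₁sq : s₁ ^ 2 = a ^ 2 + c := Real.sq_sqrt (by positivity)
  have hs₂sq : s₂ ^ 2 = b ^ 2 + c := Real.sq_sqrt (by positivity)
  have ha0 : 0 ≤ a := norm_nonneg _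
  have hb0 : 0 ≤ b := norm_nonneg _
  have hcs : 0 < Real.sqrt c := Real.sqrt_pos.2 hc
  have hs₁c : Real.sqrt c ≤ s₁ := Real.sqrt_le_sqrt (by nlinarith)
  have hs₂c : Real.sqrt c ≤ s₂ := Real.sqrt_le_sqrt (by nlinarith)
  have hinv₁ : s₁⁻¹ ≤ (Real.sqrt c)⁻¹ := inv_anti₀ hcs hs₁c
  -- decomposition
  have hdec : (s₁⁻¹ • Q₁ - s₂⁻¹ • Q₂ : E) = s₁⁻¹ • (Q₁ - Q₂) + (s₁⁻¹ - s₂⁻¹) • Q₂ := by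
    rw [smul_sub, sub_smul]; abel
  have hab : |a - b| ≤ ‖Q₁ - Q₂‖ := abs_norm_sub_norm_le Q₁ Q₂
  have hssq : (s₁ - s₂) ^ 2 ≤ (a - b) ^ 2 := by
    have hprod : a * b + c ≤ s₁ * s₂ := by
      nlinarith [mul_pos hs₁ hs₂, sq_nonneg (a - b), sq_nonneg (s₁ * s₂ - (a * b + c)),
        mul_nonneg ha0 hb0]
    nlinarith
  have hs12 : |s₁ - s₂| ≤ |a - b| := by
    have := Real.sqrt_le_sqrt hssq
    rwa [Real.sqrt_sq_eq_abs, Real.sqrt_sq_eq_abs] at this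
  have hbs₂ : b ≤ s₂ := by nlinarith
  have hterm : |s₁⁻¹ - s₂⁻¹| * b ≤ (Real.sqrt c)⁻¹ * ‖Q₁ - Q₂‖ := by
    have heq : s₁⁻¹ - s₂⁻¹ = (s₂ - s₁) / (s₁ * s₂) := by field_simp
    have habs : |s₁⁻¹ - s₂⁻¹| = |s₂ - s₁| / (s₁ * s₂) := by
      rw [heq, abs_div, abs_of_pos (mul_pos hs₁ hs₂)]
    rw [habs]
    have h1 : |s₂ - s₁| / (s₁ * s₂) * b = (|s₂ - s₁| * (b / s₂)) / s₁ := by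
      field_simp
      try tauto
    rw [h1]
    have h2 : |s₂ - s₁| * (b / s₂) ≤ ‖Q₁ - Q₂‖ := by
      have h3 : b / s₂ ≤ 1 := (div_le_one hs₂).2 hbs₂
      have h4 : |s₂ - s₁| ≤ ‖Q₁ - Q₂‖ := by
        rw [abs_sub_comm]; exact le_trans hs12 hab
      calc |s₂ - s₁| * (b / s₂) ≤ |s₂ - s₁| * 1 :=
            mul_le_mul_of_nonneg_left h3 (abs_nonneg _)
        _ = |s₂ - s₁| := by ring
        _ ≤ ‖Q₁ - Q₂‖ := h4
    calc |s₂ - s₁| * (b / s₂) / s₁ ≤ ‖Q₁ - Q₂‖ / s₁ := by gcongr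
      _ = s₁⁻¹ * ‖Q₁ - Q₂‖ := by rw [div_eq_inv_mul]
      _ ≤ (Real.sqrt c)⁻¹ * ‖Q₁ - Q₂‖ := mul_le_mul_of_nonneg_right hinv₁ (norm_nonneg _)
  calc ‖(s₁⁻¹ • Q₁ - s₂⁻¹ • Q₂ : E)‖
      = ‖s₁⁻¹ • (Q₁ - Q₂) + (s₁⁻¹ - s₂⁻¹) • Q₂‖ := by rw [hdec]
    _ ≤ ‖s₁⁻¹ • (Q₁ - Q₂)‖ + ‖(s₁⁻¹ - s₂⁻¹) • Q₂‖ := norm_add_le _ _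
    _ = s₁⁻¹ * ‖Q₁ - Q₂‖ + |s₁⁻¹ - s₂⁻¹| * b := by
        rw [norm_smul, norm_smul, Real.norm_eq_abs, Real.norm_eq_abs,
          abs_of_pos (inv_pos.2 hs₁)]
    _ ≤ (Real.sqrt c)⁻¹ * ‖Q₁ - Q₂‖ + (Real.sqrt c)⁻¹ * ‖Q₁ - Q₂‖ := by
        have h6 := mul_le_mul_of_nonneg_right hinv₁ (norm_nonneg (Q₁ - Q₂))
        linarith [hterm]
    _ = 2 * (Real.sqrt c)⁻¹ * ‖Q₁ - Q₂‖ := by ring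

section Main

variable {E : Type*} [NormedAddCommGroup E] [InnerProductSpace ℝ E]

/-- Strong monotonicity of F. -/
lemma F_strong_mono [FiniteDimensional ℝ E]
    (C H : ℝ → E →ₗ[ℝ] E) (d : ℝ → ℝ) (αC αH αd : ℝ)
    (hαd : 0 < αd)
    (hCbound : ∀ (z : ℝ) (x : E), αC * ‖x‖ ^ 2 ≤ ⟪C z x, x⟫)
    (hHbound : ∀ (z : ℝ) (x : E), αH * ‖x‖ ^ 2 ≤ ⟪H z x, x⟫)
    (hdbound : ∀ z : ℝ, αd ≤ d z)
    (γ : ℝ) (hγ : 0 < γ) (z : ℝ) (Q₁ Q₂ : E) :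
    (αC + αH) * ‖Q₁ - Q₂‖ ^ 2 ≤
      ⟪(C z Q₁ + H z Q₁ + (d z * (Real.sqrt (‖Q₁‖ ^ 2 + 1 / γ ^ 2))⁻¹) • Q₁) -
        (C z Q₂ + H z Q₂ + (d z * (Real.sqrt (‖Q₂‖ ^ 2 + 1 / γ ^ 2))⁻¹) • Q₂), Q₁ - Q₂⟫ := by
  have hc : (0:ℝ) < 1 / γ ^ 2 := by positivity
  have hg := grad_mono (E := E) hc Q₁ Q₂
  have hd0 : 0 < d z := lt_of_lt_of_le hαd (hdbound z)
  have hrw : (C z Q₁ + H z Q₁ + (d z * (Real.sqrt (‖Q₁‖ ^ 2 + 1 / γ ^ 2))⁻¹) • Q₁) -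
      (C z Q₂ + H z Q₂ + (d z * (Real.sqrt (‖Q₂‖ ^ 2 + 1 / γ ^ 2))⁻¹) • Q₂)
      = C z (Q₁ - Q₂) + H z (Q₁ - Q₂) +
        d z • ((Real.sqrt (‖Q₁‖ ^ 2 + 1 / γ ^ 2))⁻¹ • Q₁ -
          (Real.sqrt (‖Q₂‖ ^ 2 + 1 / γ ^ 2))⁻¹ • Q₂) := by
    simp only [map_sub, mul_smul, smul_sub]
    abel
  rw [hrw, inner_add_left, inner_add_left, real_inner_smul_left]
  have h1 := hCbound z (Q₁ - Q₂)
  have h2 := hHbound z (Q₁ - Q₂)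
  nlinarith [mul_nonneg hd0.le hg]

/-- Lipschitz continuity of F for fixed γ, z. -/
lemma F_lip [FiniteDimensional ℝ E]
    (C H : ℝ → E →ₗ[ℝ] E) (d : ℝ → ℝ) (m : ℝ)
    (γ : ℝ) (hγ : 0 < γ) (z : ℝ) (hd0 : 0 ≤ d z) :
    ∃ L : ℝ, m ≤ L ∧ ∀ Q₁ Q₂ : E,
      ‖(C z Q₁ + H z Q₁ + (d z * (Real.sqrt (‖Q₁‖ ^ 2 + 1 / γ ^ 2))⁻¹) • Q₁) -
        (C z Q₂ + H z Q₂ + (d z * (Real.sqrt (‖Q₂‖ ^ 2 + 1 / γ ^ 2))⁻¹) • Q₂)‖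
        ≤ L * ‖Q₁ - Q₂‖ := by
  have hc : (0:ℝ) < 1 / γ ^ 2 := by positivity
  set Cz := LinearMap.toContinuousLinearMap (C z) with hCz
  set Hz := LinearMap.toContinuousLinearMap (H z) with hHz
  set L₀ : ℝ := ‖Cz‖ + ‖Hz‖ + d z * (2 * (Real.sqrt (1 / γ ^ 2))⁻¹) with hL₀
  refine ⟨max L₀ m, le_max_right _ _, fun Q₁ Q₂ => ?_⟩
  have hrw : (C z Q₁ + H z Q₁ + (d z * (Real.sqrt (‖Q₁‖ ^ 2 + 1 / γ ^ 2))⁻¹) • Q₁) -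
      (C z Q₂ + H z Q₂ + (d z * (Real.sqrt (‖Q₂‖ ^ 2 + 1 / γ ^ 2))⁻¹) • Q₂)
      = C z (Q₁ - Q₂) + H z (Q₁ - Q₂) +
        d z • ((Real.sqrt (‖Q₁‖ ^ 2 + 1 / γ ^ 2))⁻¹ • Q₁ -
          (Real.sqrt (‖Q₂‖ ^ 2 + 1 / γ ^ 2))⁻¹ • Q₂) := by
    simp only [map_sub, mul_smul, smul_sub]
    abel
  rw [hrw]
  have hC1 : ‖C z (Q₁ - Q₂)‖ ≤ ‖Cz‖ * ‖Q₁ - Q₂‖ := by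
    have := Cz.le_opNorm (Q₁ - Q₂)
    simpa [hCz] using this
  have hH1 : ‖H z (Q₁ - Q₂)‖ ≤ ‖Hz‖ * ‖Q₁ - Q₂‖ := by
    have := Hz.le_opNorm (Q₁ - Q₂)
    simpa [hHz] using this
  have hg := grad_lip (E := E) hc Q₁ Q₂
  have hN : ‖d z • ((Real.sqrt (‖Q₁‖ ^ 2 + 1 / γ ^ 2))⁻¹ • Q₁ -
      (Real.sqrt (‖Q₂‖ ^ 2 + 1 / γ ^ 2))⁻¹ • Q₂)‖
      ≤ d z * (2 * (Real.sqrt (1 / γ ^ 2))⁻¹) * ‖Q₁ - Q₂‖ := by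
    rw [norm_smul, Real.norm_eq_abs, abs_of_nonneg hd0]
    calc d z * ‖(Real.sqrt (‖Q₁‖ ^ 2 + 1 / γ ^ 2))⁻¹ • Q₁ -
          (Real.sqrt (‖Q₂‖ ^ 2 + 1 / γ ^ 2))⁻¹ • Q₂‖
        ≤ d z * (2 * (Real.sqrt (1 / γ ^ 2))⁻¹ * ‖Q₁ - Q₂‖) :=
          mul_le_mul_of_nonneg_left hg hd0
      _ = d z * (2 * (Real.sqrt (1 / γ ^ 2))⁻¹) * ‖Q₁ - Q₂‖ := by ring
  calc ‖C z (Q₁ - Q₂) + H z (Q₁ - Q₂) + d z • ((Real.sqrt (‖Q₁‖ ^ 2 + 1 / γ ^ 2))⁻¹ • Q₁ -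
        (Real.sqrt (‖Q₂‖ ^ 2 + 1 / γ ^ 2))⁻¹ • Q₂)‖
      ≤ ‖C z (Q₁ - Q₂) + H z (Q₁ - Q₂)‖ + ‖d z • ((Real.sqrt (‖Q₁‖ ^ 2 + 1 / γ ^ 2))⁻¹ • Q₁ -
        (Real.sqrt (‖Q₂‖ ^ 2 + 1 / γ ^ 2))⁻¹ • Q₂)‖ := norm_add_le _ _
    _ ≤ (‖C z (Q₁ - Q₂)‖ + ‖H z (Q₁ - Q₂)‖) + ‖d z • ((Real.sqrt (‖Q₁‖ ^ 2 + 1 / γ ^ 2))⁻¹ • Q₁ -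
        (Real.sqrt (‖Q₂‖ ^ 2 + 1 / γ ^ 2))⁻¹ • Q₂)‖ := by
        gcongr
        exact norm_add_le _ _
    _ ≤ (‖Cz‖ * ‖Q₁ - Q₂‖ + ‖Hz‖ * ‖Q₁ - Q₂‖) +
        d z * (2 * (Real.sqrt (1 / γ ^ 2))⁻¹) * ‖Q₁ - Q₂‖ := add_le_add (add_le_add hC1 hH1) hN
    _ = L₀ * ‖Q₁ - Q₂‖ := by rw [hL₀]; ring
    _ ≤ max L₀ m * ‖Q₁ - Q₂‖ :=
        mul_le_mul_of_nonneg_right (le_max_left _ _) (norm_nonneg _)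

end Main

/-- For every `γ > 0` and `z` the map `F_{z,γ}(Q) = C(z)Q + H(z)Q + d(z)∇h_γ(Q)` is a
bijection of `E`, and its inverse is Lipschitz with a constant `C̃ > 0` independent of
`γ` and `z` (equivalently, `‖Q₁ − Q₂‖ ≤ C̃ ‖F_{z,γ}(Q₁) − F_{z,γ}(Q₂)‖`). -/
theorem F_bijective_inverse_lipschitz
    {E : Type*} [NormedAddCommGroup E] [InnerProductSpace ℝ E] [FiniteDimensional ℝ E]
    (C H : ℝ → E →ₗ[ℝ] E) (d : ℝ → ℝ)
    (αC βC αH βH αd βd LC LH Ld : ℝ)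
    (hαC : 0 < αC) (hβC : αC ≤ βC) (hαH : 0 < αH) (hβH : αH ≤ βH)
    (hαd : 0 < αd) (hβd : αd ≤ βd)
    (hCsym : ∀ (z : ℝ) (x y : E), ⟪C z x, y⟫ = ⟪x, C z y⟫)
    (hHsym : ∀ (z : ℝ) (x y : E), ⟪H z x, y⟫ = ⟪x, H z y⟫)
    (hClip : ∀ (z₁ z₂ : ℝ) (x : E), ‖C z₁ x - C z₂ x‖ ≤ LC * |z₁ - z₂| * ‖x‖)
    (hHlip : ∀ (z₁ z₂ : ℝ) (x : E), ‖H z₁ x - H z₂ x‖ ≤ LH * |z₁ - z₂| * ‖x‖)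
    (hdlip : ∀ z₁ z₂ : ℝ, |d z₁ - d z₂| ≤ Ld * |z₁ - z₂|)
    (hCbound : ∀ (z : ℝ) (x : E), αC * ‖x‖ ^ 2 ≤ ⟪C z x, x⟫ ∧ ⟪C z x, x⟫ ≤ βC * ‖x‖ ^ 2)
    (hHbound : ∀ (z : ℝ) (x : E), αH * ‖x‖ ^ 2 ≤ ⟪H z x, x⟫ ∧ ⟪H z x, x⟫ ≤ βH * ‖x‖ ^ 2)
    (hdbound : ∀ z : ℝ, αd ≤ d z ∧ d z ≤ βd) :
    (∀ (γ : ℝ), 0 < γ → ∀ z : ℝ, Function.Bijective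
      (fun Q : E => C z Q + H z Q + (d z * (Real.sqrt (‖Q‖ ^ 2 + 1 / γ ^ 2))⁻¹) • Q)) ∧
    ∃ Ct > 0, ∀ (γ : ℝ), 0 < γ → ∀ (z : ℝ) (Q₁ Q₂ : E),
      ‖Q₁ - Q₂‖ ≤ Ct *
        ‖(C z Q₁ + H z Q₁ + (d z * (Real.sqrt (‖Q₁‖ ^ 2 + 1 / γ ^ 2))⁻¹) • Q₁) -
          (C z Q₂ + H z Q₂ + (d z * (Real.sqrt (‖Q₂‖ ^ 2 + 1 / γ ^ 2))⁻¹) • Q₂)‖ := by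
  classical
  set m := αC + αH with hm
  have hmpos : 0 < m := by positivity
  have mono : ∀ (γ : ℝ), 0 < γ → ∀ (z : ℝ) (Q₁ Q₂ : E),
      m * ‖Q₁ - Q₂‖ ^ 2 ≤
      ⟪(C z Q₁ + H z Q₁ + (d z * (Real.sqrt (‖Q₁‖ ^ 2 + 1 / γ ^ 2))⁻¹) • Q₁) -
        (C z Q₂ + H z Q₂ + (d z * (Real.sqrt (‖Q₂‖ ^ 2 + 1 / γ ^ 2))⁻¹) • Q₂), Q₁ - Q₂⟫ :=
    fun γ hγ z Q₁ Q₂ => F_strong_mono C H d αC αH αd hαd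
      (fun z x => (hCbound z x).1) (fun z x => (hHbound z x).1)
      (fun z => (hdbound z).1) γ hγ z Q₁ Q₂
  constructor
  · intro γ hγ z
    constructor
    · -- injective
      intro Q₁ Q₂ hFeq
      simp only at hFeq
      have h := mono γ hγ z Q₁ Q₂
      rw [hFeq, sub_self, inner_zero_left] at h
      have h2 : ‖Q₁ - Q₂‖ ^ 2 ≤ 0 := by nlinarith
      have h3 : Q₁ - Q₂ = 0 := by
        have := norm_nonneg (Q₁ - Q₂)
        have h4 : ‖Q₁ - Q₂‖ = 0 := by nlinarith
        exact norm_eq_zero.1 h4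
      exact sub_eq_zero.1 h3
    · -- surjective
      intro S
      have hdz : (0:ℝ) < d z := lt_of_lt_of_le hαd (hdbound z).1
      obtain ⟨L, hmL, hL⟩ := F_lip C H d m γ hγ z hdz.le
      have hLpos : 0 < L := lt_of_lt_of_le hmpos hmL
      set F : E → E :=
        fun Q => C z Q + H z Q + (d z * (Real.sqrt (‖Q‖ ^ 2 + 1 / γ ^ 2))⁻¹) • Q with hF
      set t := m / L ^ 2 with ht
      have htpos : 0 < t := by positivity
      set T : E → E := fun Q => Q - t • (F Q - S) with hT
      have hargnn : 0 ≤ 1 - m ^ 2 / L ^ 2 := by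
        have h1 : m ^ 2 ≤ L ^ 2 := by nlinarith
        have h2 : m ^ 2 / L ^ 2 ≤ 1 := by
          rw [div_le_one (by positivity)]; exact h1
        linarith
      set k := Real.sqrt (1 - m ^ 2 / L ^ 2) with hk
      have hk0 : 0 ≤ k := Real.sqrt_nonneg _
      clear_value F t T k
      have hk1 : k < 1 := by
        rw [hk]
        have h1 : 1 - m ^ 2 / L ^ 2 < 1 := by
          have : 0 < m ^ 2 / L ^ 2 := by positivity
          linarith
        calc Real.sqrt (1 - m ^ 2 / L ^ 2) < Real.sqrt 1 := Real.sqrt_lt_sqrt hargnn h1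
          _ = 1 := Real.sqrt_one
      have hcontr : ∀ Q₁ Q₂ : E, ‖T Q₁ - T Q₂‖ ≤ k * ‖Q₁ - Q₂‖ := by
        intro Q₁ Q₂
        have hmono : m * ‖Q₁ - Q₂‖ ^ 2 ≤ ⟪F Q₁ - F Q₂, Q₁ - Q₂⟫ := by
          simp only [hF]; exact mono γ hγ z Q₁ Q₂
        have hlip : ‖F Q₁ - F Q₂‖ ≤ L * ‖Q₁ - Q₂‖ := by
          simp only [hF]; exact hL Q₁ Q₂
        have hexp : ‖T Q₁ - T Q₂‖ ^ 2 = ‖Q₁ - Q₂‖ ^ 2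
            - 2 * t * ⟪F Q₁ - F Q₂, Q₁ - Q₂⟫ + t ^ 2 * ‖F Q₁ - F Q₂‖ ^ 2 := by
          have h1 : T Q₁ - T Q₂ = (Q₁ - Q₂) - t • (F Q₁ - F Q₂) := by
            simp only [hT, smul_sub]
            abel
          rw [h1, norm_sub_sq_real, real_inner_smul_right, norm_smul, Real.norm_eq_abs,
            abs_of_pos htpos, real_inner_comm]
          ring
        have hk2 : k ^ 2 = 1 - m ^ 2 / L ^ 2 := by rw [hk]; exact Real.sq_sqrt hargnn
        have hFn : ‖F Q₁ - F Q₂‖ ^ 2 ≤ L ^ 2 * ‖Q₁ - Q₂‖ ^ 2 := by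
          nlinarith [norm_nonneg (F Q₁ - F Q₂), norm_nonneg (Q₁ - Q₂)]
        have hsq : ‖T Q₁ - T Q₂‖ ^ 2 ≤ (k * ‖Q₁ - Q₂‖) ^ 2 := by
          rw [hexp, mul_pow, hk2]
          have e1 : (1 - m ^ 2 / L ^ 2) * ‖Q₁ - Q₂‖ ^ 2
              = ‖Q₁ - Q₂‖ ^ 2 - 2 * t * (m * ‖Q₁ - Q₂‖ ^ 2) + t ^ 2 * (L ^ 2 * ‖Q₁ - Q₂‖ ^ 2) := by
            rw [ht]
            field_simp
            ring
          rw [e1]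
          have h1 := mul_le_mul_of_nonneg_left hmono (by positivity : (0:ℝ) ≤ 2 * t)
          have h2 := mul_le_mul_of_nonneg_left hFn (by positivity : (0:ℝ) ≤ t ^ 2)
          linarith
        have := Real.sqrt_le_sqrt hsq
        rwa [Real.sqrt_sq (norm_nonneg _),
          Real.sqrt_sq (mul_nonneg hk0 (norm_nonneg _))] at this
      have hK : ContractingWith ⟨k, hk0⟩ T := by
        constructor
        · change @LT.lt NNReal _ ⟨k, hk0⟩ 1
          refine NNReal.coe_lt_coe.1 ?_
          exact hk1
        · apply LipschitzWith.of_dist_le_mul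
          intro x y
          rw [dist_eq_norm, dist_eq_norm]
          exact hcontr x y
      haveI : Nonempty E := ⟨0⟩
      refine ⟨ContractingWith.fixedPoint T hK, ?_⟩
      have hfix : T (ContractingWith.fixedPoint T hK) = ContractingWith.fixedPoint T hK :=
        hK.fixedPoint_isFixedPt
      set Q := ContractingWith.fixedPoint T hK
      have h1 : t • (F Q - S) = 0 := by
        have h2 : Q - t • (F Q - S) = Q := by
          have h2' := hfix
          rw [hT] at h2'
          exact h2'
        have := sub_eq_self.1 h2
        exact this
      have h3 : F Q - S = 0 := by
        rcases smul_eq_zero.1 h1 with h | h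
        · exact absurd h htpos.ne'
        · exact h
      show F Q = S
      exact sub_eq_zero.1 h3
  · -- inverse Lipschitz
    refine ⟨m⁻¹, by positivity, ?_⟩
    intro γ hγ z Q₁ Q₂
    have h := mono γ hγ z Q₁ Q₂
    have hcs := real_inner_le_norm
      ((C z Q₁ + H z Q₁ + (d z * (Real.sqrt (‖Q₁‖ ^ 2 + 1 / γ ^ 2))⁻¹) • Q₁) -
        (C z Q₂ + H z Q₂ + (d z * (Real.sqrt (‖Q₂‖ ^ 2 + 1 / γ ^ 2))⁻¹) • Q₂)) (Q₁ - Q₂)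
    rcases eq_or_lt_of_le (norm_nonneg (Q₁ - Q₂)) with h0 | h0
    · rw [← h0]
      positivity
    · have h2 : m * ‖Q₁ - Q₂‖ ≤
          ‖(C z Q₁ + H z Q₁ + (d z * (Real.sqrt (‖Q₁‖ ^ 2 + 1 / γ ^ 2))⁻¹) • Q₁) -
            (C z Q₂ + H z Q₂ + (d z * (Real.sqrt (‖Q₂‖ ^ 2 + 1 / γ ^ 2))⁻¹) • Q₂)‖ := by
        nlinarith
      have h3 := mul_le_mul_of_nonneg_left h2 (inv_nonneg.2 hmpos.le)
      rwa [← mul_assoc, inv_mul_cancel₀ hmpos.ne', one_mul] at h3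
end

section
/- Under the standing assumptions on W, V, Π, C, H, d, there exists a constant c₂ > 0, independent of γ and z, such that for every γ > 0, every z ∈ ℝ, and all E₁, E₂ ∈ W: ⟨b_{z,γ}(E₁) − b_{z,γ}(E₂), E₁ − E₂⟩ ≥ c₂ ‖E₁ − E₂‖², where b_{z,γ}(E) = C(z)(E − F_{z,γ}^{-1}(Π(C(z)E))). -/
open scoped RealInnerProductSpace


lemma grad_mono_aux {W : Type*} [NormedAddCommGroup W] [InnerProductSpace ℝ W]
    (c : ℝ) (hc : 0 < c) (x y : W) :
    0 ≤ ⟪(Real.sqrt (‖x‖ ^ 2 + c))⁻¹ • x - (Real.sqrt (‖y‖ ^ 2 + c))⁻¹ • y, x - y⟫ := by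
  set a := ‖x‖ with ha
  set b := ‖y‖ with hb
  have ha0 : 0 ≤ a := norm_nonneg x
  have hb0 : 0 ≤ b := norm_nonneg y
  have hsa : 0 < Real.sqrt (a ^ 2 + c) := Real.sqrt_pos.2 (by positivity)
  have hsb : 0 < Real.sqrt (b ^ 2 + c) := Real.sqrt_pos.2 (by positivity)
  set ta := (Real.sqrt (a ^ 2 + c))⁻¹ with hta
  set tb := (Real.sqrt (b ^ 2 + c))⁻¹ with htb
  have hta0 : 0 < ta := by positivity
  have htb0 : 0 < tb := by positivity
  have hexp : ⟪ta • x - tb • y, x - y⟫ =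
      ta * (a * a) + tb * (b * b) - (ta + tb) * ⟪x, y⟫ := by
    simp only [inner_sub_left, inner_sub_right, real_inner_smul_left]
    rw [real_inner_self_eq_norm_mul_norm, real_inner_self_eq_norm_mul_norm,
      real_inner_comm y x]
    ring
  rw [hexp]
  have hcs : ⟪x, y⟫ ≤ a * b := real_inner_le_norm x y
  have key : 0 ≤ (ta * a - tb * b) * (a - b) := by
    have mono : ∀ u v : ℝ, 0 ≤ u → 0 ≤ v → u ≤ v →
        u * (Real.sqrt (u ^ 2 + c))⁻¹ ≤ v * (Real.sqrt (v ^ 2 + c))⁻¹ := by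
      intro u v hu hv huv
      rw [← div_eq_mul_inv, ← div_eq_mul_inv,
        div_le_div_iff₀ (Real.sqrt_pos.2 (by positivity)) (Real.sqrt_pos.2 (by positivity))]
      have h1 : u * Real.sqrt (v ^ 2 + c) = Real.sqrt (u ^ 2 * (v ^ 2 + c)) := by
        rw [Real.sqrt_mul (by positivity), Real.sqrt_sq hu]
      have h2 : v * Real.sqrt (u ^ 2 + c) = Real.sqrt (v ^ 2 * (u ^ 2 + c)) := by
        rw [Real.sqrt_mul (by positivity), Real.sqrt_sq hv]
      rw [h1, h2]
      apply Real.sqrt_le_sqrt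
      nlinarith [mul_self_le_mul_self hu huv, hc.le]
    rcases le_total a b with hab | hab
    · have := mono a b ha0 hb0 hab
      have h1 : ta * a - tb * b ≤ 0 := by rw [hta, htb]; nlinarith
      nlinarith
    · have := mono b a hb0 ha0 hab
      have h1 : 0 ≤ ta * a - tb * b := by rw [hta, htb]; nlinarith
      nlinarith
  nlinarith [add_pos hta0 htb0]

set_option maxHeartbeats 1000000 in
/-- There is a constant `c₂ > 0`, independent of `γ` and `z`, such that the map
`b_{z,γ}(E) = C(z)(E − F_{z,γ}⁻¹(Π(C(z)E)))` is strongly monotone with constant `c₂`. -/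
theorem b_strongly_monotone
    {W : Type*} [NormedAddCommGroup W] [InnerProductSpace ℝ W] [FiniteDimensional ℝ W]
    (V : Submodule ℝ W)
    (C H : ℝ → W →ₗ[ℝ] W) (d : ℝ → ℝ)
    (αC βC αH βH αd βd LC LH Ld : ℝ)
    (hαC : 0 < αC) (hβC : αC ≤ βC) (hαH : 0 < αH) (hβH : αH ≤ βH)
    (hαd : 0 < αd) (hβd : αd ≤ βd)
    (hCsym : ∀ (z : ℝ) (x y : W), ⟪C z x, y⟫ = ⟪x, C z y⟫)
    (hHsym : ∀ (z : ℝ) (x y : W), ⟪H z x, y⟫ = ⟪x, H z y⟫)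
    (hClip : ∀ (z₁ z₂ : ℝ) (x : W), ‖C z₁ x - C z₂ x‖ ≤ LC * |z₁ - z₂| * ‖x‖)
    (hHlip : ∀ (z₁ z₂ : ℝ) (x : W), ‖H z₁ x - H z₂ x‖ ≤ LH * |z₁ - z₂| * ‖x‖)
    (hdlip : ∀ z₁ z₂ : ℝ, |d z₁ - d z₂| ≤ Ld * |z₁ - z₂|)
    (hCbound : ∀ (z : ℝ) (x : W), αC * ‖x‖ ^ 2 ≤ ⟪C z x, x⟫ ∧ ⟪C z x, x⟫ ≤ βC * ‖x‖ ^ 2)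
    (hHbound : ∀ (z : ℝ) (x : W), αH * ‖x‖ ^ 2 ≤ ⟪H z x, x⟫ ∧ ⟪H z x, x⟫ ≤ βH * ‖x‖ ^ 2)
    (hdbound : ∀ z : ℝ, αd ≤ d z ∧ d z ≤ βd)
    (hCV : ∀ (z : ℝ), ∀ x ∈ V, C z x ∈ V) (hHV : ∀ (z : ℝ), ∀ x ∈ V, H z x ∈ V)
    (F : ℝ → ℝ → V → V)
    (hF : ∀ (z γ : ℝ) (Q : V), ((F z γ Q : W)) =
      C z (Q : W) + H z (Q : W) +
        (d z * (Real.sqrt (‖(Q : W)‖ ^ 2 + 1 / γ ^ 2))⁻¹) • (Q : W))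
    (Finv : ℝ → ℝ → V → V)
    (hFinvL : ∀ (γ : ℝ), 0 < γ → ∀ z : ℝ, Function.LeftInverse (Finv z γ) (F z γ))
    (hFinvR : ∀ (γ : ℝ), 0 < γ → ∀ z : ℝ, Function.RightInverse (Finv z γ) (F z γ)) :
    ∃ c₂ > 0, ∀ (γ : ℝ), 0 < γ → ∀ (z : ℝ) (E₁ E₂ : W),
      ⟪C z (E₁ - ((Finv z γ (Submodule.orthogonalProjection V (C z E₁)) : V) : W)) -
          C z (E₂ - ((Finv z γ (Submodule.orthogonalProjection V (C z E₂)) : V) : W)),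
        E₁ - E₂⟫ ≥ c₂ * ‖E₁ - E₂‖ ^ 2 := by

  refine ⟨min αC αH / 2, by positivity, ?_⟩
  intro γ hγ z E₁ E₂
  set P := Submodule.orthogonalProjection V with hP
  set Q₁ := Finv z γ (P (C z E₁)) with hQ₁
  set Q₂ := Finv z γ (P (C z E₂)) with hQ₂
  set A := E₁ - E₂ with hA
  set q := (Q₁ : W) - (Q₂ : W) with hq
  have hc : (0:ℝ) < 1 / γ ^ 2 := by positivity
  set t₁ := (Real.sqrt (‖(Q₁ : W)‖ ^ 2 + 1 / γ ^ 2))⁻¹ with ht₁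
  set t₂ := (Real.sqrt (‖(Q₂ : W)‖ ^ 2 + 1 / γ ^ 2))⁻¹ with ht₂
  have hFQ₁ : F z γ Q₁ = P (C z E₁) := hFinvR γ hγ z _
  have hFQ₂ : F z γ Q₂ = P (C z E₂) := hFinvR γ hγ z _
  have hqV : q ∈ V := sub_mem Q₁.2 Q₂.2
  have hlhs : C z (E₁ - (Q₁ : W)) - C z (E₂ - (Q₂ : W)) = C z (A - q) := by
    rw [← map_sub]
    congr 1
    rw [hA, hq]
    abel
  have hPA : (↑(P (C z A)) : W) = (↑(F z γ Q₁) : W) - (↑(F z γ Q₂) : W) := by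
    rw [hFQ₁, hFQ₂, hA, map_sub (C z), map_sub P]
    simp
  have hinner1 : ⟪C z A, q⟫ = ⟪(↑(P (C z A)) : W), q⟫ := by
    have h0 := V.starProjection_inner_eq_zero (C z A) q hqV
    rw [Submodule.starProjection_apply] at h0
    rw [inner_sub_left] at h0
    linarith
  have hFdiff : (↑(F z γ Q₁) : W) - (↑(F z γ Q₂) : W) =
      C z q + H z q + d z • (t₁ • (Q₁ : W) - t₂ • (Q₂ : W)) := by
    rw [hF z γ Q₁, hF z γ Q₂, hq, map_sub, map_sub, ← ht₁, ← ht₂, mul_smul, mul_smul,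
      smul_sub]
    abel
  have hmono : (0:ℝ) ≤ ⟪t₁ • (Q₁ : W) - t₂ • (Q₂ : W), q⟫ := by
    rw [hq, ht₁, ht₂]
    exact grad_mono_aux (1 / γ ^ 2) hc (Q₁ : W) (Q₂ : W)
  have key : ⟪C z (A - q), q⟫ =
      ⟪H z q, q⟫ + d z * ⟪t₁ • (Q₁ : W) - t₂ • (Q₂ : W), q⟫ := by
    have hCA : ⟪C z A, q⟫ = ⟪C z q, q⟫ + ⟪H z q, q⟫ +
        d z * ⟪t₁ • (Q₁ : W) - t₂ • (Q₂ : W), q⟫ := by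
      rw [hinner1, hPA, hFdiff]
      simp [inner_add_left, real_inner_smul_left]
    rw [map_sub, inner_sub_left, hCA]
    ring
  have hsplit : ⟪C z (A - q), A⟫ = ⟪C z (A - q), A - q⟫ + ⟪C z (A - q), q⟫ := by
    rw [← inner_add_right]
    congr 1
    abel
  have h1 := (hCbound z (A - q)).1
  have h2 := (hHbound z q).1
  have hd := (hdbound z).1
  have htri : ‖A‖ ≤ ‖A - q‖ + ‖q‖ := by
    have h := norm_add_le (A - q) q
    simpa using h
  have hn2 : ‖A‖ * ‖A‖ ≤ (‖A - q‖ + ‖q‖) * (‖A - q‖ + ‖q‖) :=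
    mul_self_le_mul_self (norm_nonneg A) htri
  have hdm : 0 ≤ d z * ⟪t₁ • (Q₁ : W) - t₂ • (Q₂ : W), q⟫ :=
    mul_nonneg (le_trans hαd.le hd) hmono
  rw [hlhs, hsplit, key]
  have hm1 : min αC αH ≤ αC := min_le_left _ _
  have hm2 : min αC αH ≤ αH := min_le_right _ _
  have hm0 : 0 < min αC αH := lt_min hαC hαH
  nlinarith [sq_nonneg (‖A - q‖ - ‖q‖), norm_nonneg (A - q), norm_nonneg q,
    norm_nonneg A, sq_nonneg ‖A - q‖, sq_nonneg ‖q‖]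
end
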